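/- arXiv:2310.10013 — 2 statements merged into one kernel-verified Lean document; each statement's English description precedes it below -/
import Mathlib

section
/- Let M₁ be a linear map and M₂ a nonzero scalar multiple of an orthogonal transformation (so that ‖M₂v‖ = ‖M₂‖·‖v‖ for all v, where ‖M₂‖ denotes the scaling factor). For x in the open unit ball with x ≠ 0 and M₁x ≠ 0, the composition of hyperbolic matrix-vector multiplications satisfies M₂^⊗(M₁^⊗(x)) = tanh((‖M₂‖·‖M₁x‖/‖x‖)·artanh(‖x‖)) · (M₂M₁x)/(‖M₂‖·‖M₁x‖) = (M₂M₁)^⊗(x). -/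
/-! Every vector involved is a scalar multiple of `M₂ (M₁ x)`. For `x` in the ball,
`y = M₁^⊗(x)` satisfies `artanh ‖y‖ = (‖M₁ x‖ / ‖x‖) · artanh ‖x‖`, and a conformal `M₂` with
factor `c` acts by `M₂^⊗(y) = tanh (c · artanh ‖y‖) / (c ‖y‖) · M₂ y`. So the hyperbolic stretch
factors multiply, which is also what `(M₂ M₁)^⊗` does because `‖M₂ (M₁ x)‖ = c ‖M₁ x‖`. -/
open scoped Classical

noncomputable def artanh (t : ℝ) : ℝ := Real.log ((1 + t) / (1 - t)) / 2

/-- Hyperbolic matrix-vector multiplication on the Poincaré ball, with `M^⊗(x) = 0`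
whenever `M x = 0` (in particular `M^⊗(0) = 0`). -/
noncomputable def hypMul {n : ℕ} (M : EuclideanSpace ℝ (Fin n) →ₗ[ℝ] EuclideanSpace ℝ (Fin n))
    (x : EuclideanSpace ℝ (Fin n)) : EuclideanSpace ℝ (Fin n) :=
  if M x = 0 then 0 else
    Real.tanh ((‖M x‖ / ‖x‖) * artanh ‖x‖) • (‖M x‖⁻¹ • M x)

/- Outside `[-1, 1]` the two differ: `Real.artanh t = log √((1 + t) / (1 - t))`, and `√` truncates
a negative argument to `0`. -/
lemma artanh_eq_real_artanh {t : ℝ} (ht : t ∈ Set.Icc (-1) 1) : artanh t = Real.artanh t := by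
  rw [Real.artanh_eq_half_log ht, artanh]
  ring

lemma artanh_tanh (z : ℝ) : artanh (Real.tanh z) = z := by
  rw [artanh_eq_real_artanh ⟨(Real.neg_one_lt_tanh z).le, (Real.tanh_lt_one z).le⟩,
    Real.artanh_tanh]

lemma artanh_pos {t : ℝ} (h0 : 0 < t) (h1 : t < 1) : 0 < artanh t := by
  rw [artanh_eq_real_artanh ⟨by linarith, h1.le⟩]
  exact Real.artanh_pos ⟨h0, h1⟩

lemma tanh_pos {z : ℝ} (hz : 0 < z) : 0 < Real.tanh z := by
  rw [Real.tanh_eq_sinh_div_cosh]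
  exact div_pos (Real.sinh_pos_iff.mpr hz) (Real.cosh_pos z)

section HypMul

variable {n : ℕ} (M : EuclideanSpace ℝ (Fin n) →ₗ[ℝ] EuclideanSpace ℝ (Fin n))

lemma hypMul_eq_smul (x : EuclideanSpace ℝ (Fin n)) :
    hypMul M x = (Real.tanh (‖M x‖ / ‖x‖ * artanh ‖x‖) * ‖M x‖⁻¹) • M x := by
  by_cases hMx : M x = 0
  · simp [hypMul, hMx]
  · rw [hypMul, if_neg hMx, smul_smul]

lemma norm_hypMul {x : EuclideanSpace ℝ (Fin n)} (hMx : M x ≠ 0) :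
    ‖hypMul M x‖ = |Real.tanh (‖M x‖ / ‖x‖ * artanh ‖x‖)| := by
  rw [hypMul_eq_smul, norm_smul, norm_mul, norm_inv, norm_norm, Real.norm_eq_abs,
    mul_assoc, inv_mul_cancel₀ (norm_ne_zero_iff.mpr hMx), mul_one]

lemma norm_ratio_mul_artanh_pos {x : EuclideanSpace ℝ (Fin n)} (hx0 : x ≠ 0) (hx1 : ‖x‖ < 1)
    (hMx : M x ≠ 0) : 0 < ‖M x‖ / ‖x‖ * artanh ‖x‖ :=
  mul_pos (div_pos (norm_pos_iff.mpr hMx) (norm_pos_iff.mpr hx0))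
    (artanh_pos (norm_pos_iff.mpr hx0) hx1)

lemma norm_hypMul_of_mem_ball {x : EuclideanSpace ℝ (Fin n)} (hx0 : x ≠ 0) (hx1 : ‖x‖ < 1)
    (hMx : M x ≠ 0) : ‖hypMul M x‖ = Real.tanh (‖M x‖ / ‖x‖ * artanh ‖x‖) := by
  rw [norm_hypMul M hMx, abs_of_pos (tanh_pos (norm_ratio_mul_artanh_pos M hx0 hx1 hMx))]

lemma hypMul_of_conformal {c : ℝ} (hconf : ∀ v, ‖M v‖ = c * ‖v‖)
    (y : EuclideanSpace ℝ (Fin n)) :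
    hypMul M y = (Real.tanh (c * artanh ‖y‖) * (c * ‖y‖)⁻¹) • M y := by
  by_cases hy : y = 0
  · simp [hy, hypMul]
  · rw [hypMul_eq_smul, hconf, mul_div_assoc, div_self (norm_ne_zero_iff.mpr hy), mul_one]

lemma hypMul_comp_of_conformal (M₂ : EuclideanSpace ℝ (Fin n) →ₗ[ℝ] EuclideanSpace ℝ (Fin n))
    {c : ℝ} (hconf : ∀ v, ‖M₂ v‖ = c * ‖v‖) (x : EuclideanSpace ℝ (Fin n)) :
    hypMul (M₂ ∘ₗ M) x
      = (Real.tanh (c * ‖M x‖ / ‖x‖ * artanh ‖x‖) * (c * ‖M x‖)⁻¹) • M₂ (M x) := by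
  rw [hypMul_eq_smul, LinearMap.comp_apply, hconf, mul_div_assoc]

end HypMul

theorem stmt1_general {n : ℕ}
    (M₁ M₂ : EuclideanSpace ℝ (Fin n) →ₗ[ℝ] EuclideanSpace ℝ (Fin n)) (c : ℝ)
    (hconf : ∀ v, ‖M₂ v‖ = c * ‖v‖)
    (x : EuclideanSpace ℝ (Fin n)) (hx0 : x ≠ 0) (hx1 : ‖x‖ < 1) (hM₁x : M₁ x ≠ 0) :
    hypMul M₂ (hypMul M₁ x)
      = Real.tanh ((c * ‖M₁ x‖ / ‖x‖) * artanh ‖x‖) • ((c * ‖M₁ x‖)⁻¹ • M₂ (M₁ x)) ∧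
    hypMul M₂ (hypMul M₁ x) = hypMul (M₂ ∘ₗ M₁) x := by
  have hy : ‖hypMul M₁ x‖ = Real.tanh (‖M₁ x‖ / ‖x‖ * artanh ‖x‖) :=
    norm_hypMul_of_mem_ball M₁ hx0 hx1 hM₁x
  have ht : Real.tanh (‖M₁ x‖ / ‖x‖ * artanh ‖x‖) ≠ 0 :=
    (tanh_pos (norm_ratio_mul_artanh_pos M₁ hx0 hx1 hM₁x)).ne'
  have h1 : hypMul M₂ (hypMul M₁ x)
      = Real.tanh ((c * ‖M₁ x‖ / ‖x‖) * artanh ‖x‖) • ((c * ‖M₁ x‖)⁻¹ • M₂ (M₁ x)) := by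
    rw [hypMul_of_conformal M₂ hconf, hy, artanh_tanh, hypMul_eq_smul M₁ x, map_smul,
      smul_smul, smul_smul, mul_div_assoc, mul_assoc c]
    congr 1
    generalize Real.tanh (‖M₁ x‖ / ‖x‖ * artanh ‖x‖) = t at ht ⊢
    rw [mul_inv, mul_inv]
    field_simp
  refine ⟨h1, h1.trans ?_⟩
  rw [hypMul_comp_of_conformal M₁ M₂ hconf, smul_smul]

theorem stmt1 {n : ℕ}
    (M₁ M₂ : EuclideanSpace ℝ (Fin n) →ₗ[ℝ] EuclideanSpace ℝ (Fin n)) (c : ℝ) (hc : 0 < c)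
    (hconf : ∀ v, ‖M₂ v‖ = c * ‖v‖)
    (x : EuclideanSpace ℝ (Fin n)) (hx0 : x ≠ 0) (hx1 : ‖x‖ < 1) (hM₁x : M₁ x ≠ 0) :
    hypMul M₂ (hypMul M₁ x)
      = Real.tanh ((c * ‖M₁ x‖ / ‖x‖) * artanh ‖x‖) • ((c * ‖M₁ x‖)⁻¹ • M₂ (M₁ x)) ∧
    hypMul M₂ (hypMul M₁ x) = hypMul (M₂ ∘ₗ M₁) x :=
  stmt1_general M₁ M₂ c hconf x hx0 hx1 hM₁x
end

section
/- The matrix exponential map restricts to a bijection from the space S(n) of real symmetric n×n matrices onto the set SPD(n) of symmetric positive definite n×n matrices. -/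
/-!
Through the continuous functional calculus, `exp a = cfc Real.exp a` for self-adjoint `a`, so its
spectrum is positive, and `CFC.log = cfc Real.log` inverts it because `Real.log ∘ Real.exp = id`
and `Real.exp ∘ Real.log = id` on the positive reals. For real matrices, self-adjoint means
symmetric and strictly positive means positive definite.
-/

open Matrix

namespace CFC

open NormedSpace

variable {A : Type*} [NormedRing A] [StarRing A] [NormedAlgebra ℝ A]
  [ContinuousFunctionalCalculus ℝ A IsSelfAdjoint] [PartialOrder A] [StarOrderedRing A]
  [NonnegSpectrumClass ℝ A]

lemma isStrictlyPositive_exp {a : A} (ha : IsSelfAdjoint a) : IsStrictlyPositive (exp a) := by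
  rw [← real_exp_eq_normedSpace_exp ha, cfc_isStrictlyPositive_iff Real.exp a]
  exact fun x _ => Real.exp_pos x

theorem bijOn_exp_isSelfAdjoint_isStrictlyPositive :
    Set.BijOn exp {a : A | IsSelfAdjoint a} {a : A | IsStrictlyPositive a} :=
  Set.InvOn.bijOn ⟨fun a ha => log_exp a ha, fun a ha => exp_log a ha⟩
    (fun _ ha => isStrictlyPositive_exp ha) (fun _ _ => IsSelfAdjoint.log)

end CFC

section

attribute [local instance] Matrix.instL2OpNormedRing Matrix.instL2OpNormedAlgebra
open scoped MatrixOrder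

theorem Matrix.bijOn_exp_isSymm_posDef {n : Type*} [Fintype n] [DecidableEq n] :
    Set.BijOn NormedSpace.exp {S : Matrix n n ℝ | S.IsSymm} {X : Matrix n n ℝ | X.PosDef} := by
  have hsymm : {S : Matrix n n ℝ | S.IsSymm} = {S | IsSelfAdjoint S} :=
    Set.ext fun _ => isHermitian_iff_isSymm.symm
  have hposDef : {X : Matrix n n ℝ | X.PosDef} = {X | IsStrictlyPositive X} :=
    Set.ext fun _ => isStrictlyPositive_iff_posDef.symm
  rw [hsymm, hposDef]
  exact CFC.bijOn_exp_isSelfAdjoint_isStrictlyPositive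

end

/-- The matrix exponential restricts to a bijection from the real symmetric `n × n`
matrices onto the symmetric positive definite `n × n` matrices. -/
theorem stmt9 {n : ℕ} :
    Set.BijOn NormedSpace.exp
      {S : Matrix (Fin n) (Fin n) ℝ | S.IsSymm}
      {X : Matrix (Fin n) (Fin n) ℝ | X.PosDef} :=
  Matrix.bijOn_exp_isSymm_posDef
end
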